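/- arXiv:2401.07983 — 2 statements merged into one kernel-verified Lean document; each statement's English description precedes it below -/
import Mathlib

section
/- Let p : X̃ → X be the universal cover of a path-connected, locally path-connected, semilocally simply connected space X, and let N ⊆ X be a path-connected subspace such that p⁻¹(N) has finitely many path components. Then the image of the induced map i₊ : π₁(N) → π₁(X) has finite index in π₁(X). -/
/-!
Fix a point `e₀` over `n₀` and send a loop class `g ∈ π₁(X, n₀)` to the path component of
`p⁻¹(N)` containing the endpoint `g • e₀` of its lift. If `g₁ • e₀` and `g₂ • e₀` are joined by a
path `δ` in `p⁻¹(N)`, then `p ∘ δ` is a loop in `N` whose class `h` satisfies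
`(h * g₁) • e₀ = g₂ • e₀`. Since `X̃` is simply connected, the monodromy action on the fibre is free,
so `g₂ * g₁⁻¹ = h` lies in the image of `π₁(N)`. Hence the right cosets of that image inject into
the finite set of path components of `p⁻¹(N)`.
-/

open CategoryTheory

/-- The homomorphism `π₁(N, n₀) → π₁(X, n₀)` induced by the inclusion of a subspace
`N ⊆ X`, obtained from the fundamental groupoid functor. -/
noncomputable def inclusionInducedPi1Map (X : Type) [TopologicalSpace X] (N : Set X) (n₀ : N) :
    Aut (FundamentalGroupoid.mk n₀) →* Aut (FundamentalGroupoid.mk (n₀ : X)) :=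
  Functor.mapAut (FundamentalGroupoid.mk n₀)
    (FundamentalGroupoid.fundamentalGroupoidFunctor.map
      (X := TopCat.of N) (Y := TopCat.of X) (TopCat.ofHom ⟨Subtype.val, continuous_subtype_val⟩))

theorem Subgroup.finiteIndex_of_eq_imp_mul_inv_mem {G S : Type*} [Group G] [Finite S]
    {H : Subgroup G} (f : G → S) (hf : ∀ a b, f a = f b → b * a⁻¹ ∈ H) : H.FiniteIndex := by
  have : Finite (Quotient (QuotientGroup.rightRel H)) := by
    refine Finite.of_injective (fun c ↦ f c.out) fun c₁ c₂ hc ↦ ?_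
    rw [← c₁.out_eq, ← c₂.out_eq]
    exact Quotient.sound (QuotientGroup.rightRel_apply.mpr (hf _ _ hc))
  have : Finite (G ⧸ H) := .of_equiv _ (QuotientGroup.quotientRightRelEquivQuotientLeftRel H)
  exact H.finiteIndex_of_finite_quotient

namespace IsCoveringMap

variable {E X : Type*} [TopologicalSpace E] [TopologicalSpace X] {p : E → X}

theorem nonempty_fiber [PathConnectedSpace X] [Nonempty E] (cov : IsCoveringMap p) (x : X) :
    Nonempty (p ⁻¹' {x}) :=
  let e : E := Classical.arbitrary E
  ⟨cov.monodromy ⟦PathConnectedSpace.somePath (p e) x⟧ ⟨e, rfl⟩⟩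

theorem eq_of_monodromy_eq [SimplyConnectedSpace E] (cov : IsCoveringMap p) {x y : X}
    {γ γ' : Path.Homotopic.Quotient x y} (e : p ⁻¹' {x})
    (h : cov.monodromy γ e = cov.monodromy γ' e) : γ = γ' := by
  have hΓ : cov.liftPathQuotient γ e = (cov.liftPathQuotient γ' e).cast rfl congr($h.1) :=
    Subsingleton.elim _ _
  have hmap := cov.map_liftPathQuotient γ e
  rw [hΓ, Path.Homotopic.Quotient.map_cast, cov.map_liftPathQuotient] at hmap
  exact eq_of_heq <| (Path.Homotopic.Quotient.cast_heq ..).symm.trans <|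
    (heq_of_eq hmap).symm.trans <| (Path.Homotopic.Quotient.cast_heq ..).trans
      (Path.Homotopic.Quotient.cast_heq ..)

end IsCoveringMap

theorem IsCoveringMap.exists_mem_range_inclusionInducedPi1Map_monodromy_eq {E : Type*}
    [TopologicalSpace E] {X : Type} [TopologicalSpace X] {p : E → X} (cov : IsCoveringMap p)
    {N : Set X} (n₀ : N) {e₁ e₂ : p ⁻¹' {(n₀ : X)}} (hsub : p ⁻¹' {(n₀ : X)} ⊆ p ⁻¹' N)
    (δ : Path (Set.inclusion hsub e₁) (Set.inclusion hsub e₂)) :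
    ∃ g ∈ (inclusionInducedPi1Map X N n₀).range, cov.monodromy g.hom e₁ = e₂ := by
  let loop : Path n₀ n₀ :=
    (δ.map cov.continuous.restrictPreimage).cast (Subtype.ext e₁.2.symm) (Subtype.ext e₂.2.symm)
  exact ⟨_, ⟨(Groupoid.isoEquivHom _ _).symm ⟦loop⟧, rfl⟩,
    cov.monodromy_eq_of_map_eq ⟦δ.map continuous_subtype_val⟧ rfl⟩

theorem finiteIndex_of_finitely_many_pathComponents_general
    (X : Type) [TopologicalSpace X] [PathConnectedSpace X]
    (Xt : Type) [TopologicalSpace Xt] [SimplyConnectedSpace Xt]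
    (p : Xt → X) (hp : IsCoveringMap p)
    (N : Set X) (n₀ : N)
    (hfin : Finite (ZerothHomotopy (p ⁻¹' N))) :
    (inclusionInducedPi1Map X N n₀).range.FiniteIndex := by
  obtain ⟨e₀⟩ := hp.nonempty_fiber (n₀ : X)
  have hsub : p ⁻¹' {(n₀ : X)} ⊆ p ⁻¹' N := Set.preimage_mono (Set.singleton_subset_iff.mpr n₀.2)
  let component (g : Aut (FundamentalGroupoid.mk (n₀ : X))) : ZerothHomotopy (p ⁻¹' N) :=
    .mk (Set.inclusion hsub (hp.monodromy g.hom e₀))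
  refine Subgroup.finiteIndex_of_eq_imp_mul_inv_mem component fun g₁ g₂ hg ↦ ?_
  obtain ⟨h, hH, hh⟩ :=
    hp.exists_mem_range_inclusionInducedPi1Map_monodromy_eq n₀ hsub (Quotient.exact hg).somePath
  have hg₂ : h * g₁ = g₂ := Iso.ext <| hp.eq_of_monodromy_eq e₀ <| by
    rw [← hh, ← hp.monodromy_trans_apply]
    rfl
  rwa [← hg₂, mul_inv_cancel_right]

/-- Let `p : X̃ → X` be the universal cover of a path-connected, locally path-connected
space `X`, and let `N ⊆ X` be a path-connected subspace such that `p⁻¹(N)` has finitely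
many path components.  Then the image of `i₊ : π₁(N) → π₁(X)` has finite index in
`π₁(X)`. -/
theorem finiteIndex_of_finitely_many_pathComponents
    (X : Type) [TopologicalSpace X] [PathConnectedSpace X] [LocallyPathConnectedSpace X]
    (Xt : Type) [TopologicalSpace Xt] [SimplyConnectedSpace Xt]
    (p : Xt → X) (hp : IsCoveringMap p)
    (N : Set X) (hN : IsPathConnected N) (n₀ : N)
    (hfin : Finite (ZerothHomotopy (p ⁻¹' N))) :
    (inclusionInducedPi1Map X N n₀).range.FiniteIndex :=
  finiteIndex_of_finitely_many_pathComponents_general X Xt p hp N n₀ hfin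
end

section
/- Let p : X̃ → X be a covering map where X is path-connected and locally path-connected and π₁(X) is finite, and let Y be a simply connected, path-connected, locally path-connected space with a continuous map f : Y → X. Then there exists a continuous lift f̃ : Y → X̃ with p ∘ f̃ = f, and the graph of f̃ in Y × X̃ equals the preimage of the graph of f under the map id × p : Y × X̃ → Y × X, intersected with the connected component containing a chosen lifted basepoint. -/
/-!
The lifting criterion provides the lift `f̃`. Its graph is the image of the connected
space `Y`, hence lies in the component `C` of `(id × p)⁻¹(Γ_f)` through `(y₀, x̃₀)`. Conversely,
on `C` the maps `(y, x) ↦ x` and `(y, x) ↦ f̃ y` are two lifts of the same map along `p` that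
agree at `(y₀, x̃₀)`; since `p` is separated and locally injective they agree on all of `C`.
-/

open Set

section Graph

variable {E X Y : Type*} [TopologicalSpace E] [TopologicalSpace Y]
  {p : E → X} {F : Y → E}

theorem graph_subset_connectedComponentIn [PreconnectedSpace Y] (hF : Continuous F) (y₀ : Y) :
    {q : Y × E | q.2 = F q.1} ⊆
      connectedComponentIn {q : Y × E | p q.2 = p (F q.1)} (y₀, F y₀) := by
  rintro ⟨y, x⟩ (rfl : x = F y)
  have hrange : range (fun y => (y, F y)) ⊆ {q : Y × E | p q.2 = p (F q.1)} := by
    rintro _ ⟨y, rfl⟩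
    rfl
  exact (isPreconnected_range (by fun_prop)).subset_connectedComponentIn ⟨y₀, rfl⟩ hrange ⟨y, rfl⟩

theorem IsSeparatedMap.connectedComponentIn_subset_graph [TopologicalSpace X]
    (sep : IsSeparatedMap p) (inj : IsLocallyInjective p) (hF : Continuous F) (y₀ : Y) :
    connectedComponentIn {q : Y × E | p q.2 = p (F q.1)} (y₀, F y₀) ⊆
      {q : Y × E | q.2 = F q.1} := by
  have hlifts : (connectedComponentIn {q : Y × E | p q.2 = p (F q.1)} (y₀, F y₀)).EqOn
      (p ∘ Prod.snd) (p ∘ F ∘ Prod.fst) := fun q hq =>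
    (connectedComponentIn_subset _ _ hq : q ∈ {q : Y × E | p q.2 = p (F q.1)})
  have hbase : (y₀, F y₀) ∈ connectedComponentIn {q : Y × E | p q.2 = p (F q.1)} (y₀, F y₀) :=
    mem_connectedComponentIn rfl
  exact sep.eqOn_of_comp_eqOn inj isPreconnected_connectedComponentIn
    continuous_snd.continuousOn (hF.comp continuous_fst).continuousOn hlifts hbase rfl

theorem IsCoveringMap.graph_eq_connectedComponentIn [TopologicalSpace X] [PreconnectedSpace Y]
    (hp : IsCoveringMap p) (hF : Continuous F) (y₀ : Y) :
    {q : Y × E | q.2 = F q.1} =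
      connectedComponentIn {q : Y × E | p q.2 = p (F q.1)} (y₀, F y₀) :=
  (graph_subset_connectedComponentIn hF y₀).antisymm
    (hp.isSeparatedMap.connectedComponentIn_subset_graph hp.isLocalHomeomorph.isLocallyInjective
      hF y₀)

end Graph

theorem lift_exists_and_graph_description_general
    (X Xt Y : Type) [TopologicalSpace X] [TopologicalSpace Xt] [TopologicalSpace Y]
    [SimplyConnectedSpace Y] [LocallyPathConnectedSpace Y]
    (p : Xt → X) (hp : IsCoveringMap p)
    (f : Y → X) (hf : Continuous f)
    (y₀ : Y) (xt₀ : Xt) (hbase : p xt₀ = f y₀) :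
    ∃ ft : Y → Xt, Continuous ft ∧ p ∘ ft = f ∧ ft y₀ = xt₀ ∧
      {q : Y × Xt | q.2 = ft q.1} =
        connectedComponentIn {q : Y × Xt | p q.2 = f q.1} (y₀, xt₀) := by
  obtain ⟨ft, ⟨hft₀, hpft⟩, -⟩ := hp.existsUnique_continuousMap_lifts ⟨f, hf⟩ y₀ xt₀ hbase
  refine ⟨ft, ft.continuous, hpft, hft₀, ?_⟩
  have hgraph := hp.graph_eq_connectedComponentIn ft.continuous y₀
  have hpft' : ∀ y, p (ft y) = f y := congrFun hpft
  simpa only [hft₀, hpft'] using hgraph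

/-- Lifting criterion with the graph description: a continuous map `f : Y → X` from a
simply connected, path-connected, locally path-connected space lifts along a covering
`p : X̃ → X` of a path-connected, locally path-connected space with finite fundamental
group, and the graph of the lift is the connected component of the preimage of the graph
of `f` under `id × p` containing the lifted basepoint. -/
theorem lift_exists_and_graph_description
    (X Xt Y : Type) [TopologicalSpace X] [TopologicalSpace Xt] [TopologicalSpace Y]
    [PathConnectedSpace X] [LocallyPathConnectedSpace X]
    [SimplyConnectedSpace Y] [PathConnectedSpace Y] [LocallyPathConnectedSpace Y]
    (p : Xt → X) (hp : IsCoveringMap p)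
    (f : Y → X) (hf : Continuous f)
    (y₀ : Y) (xt₀ : Xt) (hbase : p xt₀ = f y₀)
    (hπ : Finite (FundamentalGroup X (f y₀))) :
    ∃ ft : Y → Xt, Continuous ft ∧ p ∘ ft = f ∧ ft y₀ = xt₀ ∧
      {q : Y × Xt | q.2 = ft q.1} =
        connectedComponentIn {q : Y × Xt | p q.2 = f q.1} (y₀, xt₀) :=
  lift_exists_and_graph_description_general X Xt Y p hp f hf y₀ xt₀ hbase
end
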